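/- arXiv:2403.00966 — 7 statements merged into one kernel-verified Lean document; each statement's English description precedes it below -/
import Mathlib

section
/- The number of permutations of [n] with exactly m descents equals the number of permutations of [n] with exactly m excedances. -/
noncomputable def desc (n : ℕ) (σ : Equiv.Perm (Fin n)) : ℕ :=
  Nat.card {i : Fin n // ∃ h : i.val + 1 < n, σ ⟨i.val + 1, h⟩ < σ i}

noncomputable def exce (n : ℕ) (σ : Equiv.Perm (Fin n)) : ℕ :=
  Nat.card {i : Fin n // i < σ i}

def cyclicSucc {n : ℕ} (i : Fin n) : Fin n := ⟨(i.val + 1) % n, Nat.mod_lt _ i.pos⟩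

noncomputable def cdes (n : ℕ) (σ : Equiv.Perm (Fin n)) : ℕ :=
  Nat.card {i : Fin n // σ (cyclicSucc i) < σ i}

def dfsAdj {α β : Type*} [DecidableEq α] (X : α → α → Prop) (Y : β → β → Prop) (σ φ : α ≃ β) : Prop :=
  ∃ a b, X a b ∧ Y (σ a) (σ b) ∧ φ = (Equiv.swap a b).trans σ

noncomputable def outdeg {α β : Type*} [DecidableEq α] (X : α → α → Prop) (Y : β → β → Prop) (σ : α ≃ β) : ℕ :=
  Nat.card {φ : α ≃ β // dfsAdj X Y σ φ}

noncomputable def ODP {α β : Type*} [Fintype α] [Fintype β] [DecidableEq α] [DecidableEq β]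
    (X : α → α → Prop) (Y : β → β → Prop) : Polynomial ℤ :=
  ∑ σ : α ≃ β, Polynomial.X ^ outdeg X Y σ

open scoped Classical in
noncomputable def ODPc {α β : Type*} [Fintype α] [Fintype β] [DecidableEq α] [DecidableEq β]
    (X : α → α → Prop) (Y : β → β → Prop) (P : (α ≃ β) → Prop) : Polynomial ℤ :=
  ∑ σ : α ≃ β, if P σ then Polynomial.X ^ outdeg X Y σ else 0

def Tour (n : ℕ) : Fin n → Fin n → Prop := fun i j => j < i
def DPath (n : ℕ) : Fin n → Fin n → Prop := fun i j => j.val = i.val + 1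
def DCycle (n : ℕ) : Fin n → Fin n → Prop := fun i j => j = cyclicSucc i

def isPEO {n : ℕ} (R : Fin n → Fin n → Prop) : Prop :=
  (∀ i j, R i j → j < i) ∧ ∀ i j, R i j → ∀ a b : Fin n, j ≤ a → a < b → b ≤ i → R b a

def dirChordal {n : ℕ} (R : Fin n → Fin n → Prop) : Prop :=
  ∃ e : Equiv.Perm (Fin n), isPEO fun u v => R (e u) (e v)

def chordal {V : Type*} (G : SimpleGraph V) : Prop :=
  ∀ m : ℕ, 4 ≤ m → ∀ f : ZMod m → V, Function.Injective f →
    (∀ i, G.Adj (f i) (f (i + 1))) →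
    ∃ i j : ZMod m, i ≠ j ∧ j ≠ i + 1 ∧ i ≠ j + 1 ∧ G.Adj (f i) (f j)


/-!
Foata's fundamental transformation. Cut the word `w 0 ⋯ w (n-1)` before each left-to-right
maximum and close every block into a cycle, so that the cycle maxima of `transform w` are exactly
the block maxima. Inside a block `transform w` sends `w i` to `w (i+1)`; at the end of a block it
returns to the block maximum, which is at least `w i`. Hence `i` is a descent of `w` iff
`transform w (w i) < w i`, i.e. descents of `w` are the excedances of `(transform w)⁻¹`.
The transform is injective because `w` can be read back from `π = transform w`: `w 0` is the
least cycle maximum of `π`, and `w (i+1)` is `π (w i)` unless that is a cycle maximum, in which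
case it is the next larger cycle maximum.
-/

open Finset Equiv Equiv.Perm

namespace Foata

section PrefixMax

variable {α : Type*} [LinearOrder α] {n : ℕ}

def prefixMax (f : Fin n → α) (i : Fin n) : α := (Iic i).sup' nonempty_Iic f

/-- `i` is the last position of a block when `f` is cut before each left-to-right maximum. -/
def IsBlockEnd (f : Fin n → α) (i : Fin n) : Prop :=
  ∀ h : i.val + 1 < n, prefixMax f i < f ⟨i.val + 1, h⟩

variable {f : Fin n → α}

lemma prefixMax_le_iff {i : Fin n} {a : α} : prefixMax f i ≤ a ↔ ∀ j ≤ i, f j ≤ a := by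
  simp [prefixMax, sup'_le_iff]

lemma le_prefixMax {i j : Fin n} (h : j ≤ i) : f j ≤ prefixMax f i :=
  le_sup' f (mem_Iic.2 h)

lemma prefixMax_mono : Monotone (prefixMax f) := fun _ _ h =>
  prefixMax_le_iff.2 fun _ hk => le_prefixMax (hk.trans h)

lemma exists_eq_prefixMax (f : Fin n → α) (i : Fin n) :
    ∃ j ≤ i, f j = prefixMax f i ∧ prefixMax f j = f j := by
  obtain ⟨j, hj, h⟩ := exists_mem_eq_sup' (nonempty_Iic (a := i)) f
  have hji := mem_Iic.1 hj
  exact ⟨j, hji, h.symm, le_antisymm (h ▸ prefixMax_mono hji) (le_prefixMax le_rfl)⟩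

lemma prefixMax_of_val_eq_zero {i : Fin n} (hi : i.val = 0) : prefixMax f i = f i :=
  le_antisymm (prefixMax_le_iff.2 fun j hj => by rw [Fin.ext (by omega : j.val = i.val)])
    (le_prefixMax le_rfl)

lemma prefixMax_succ {i : Fin n} (hi : i.val + 1 < n) :
    prefixMax f ⟨i.val + 1, hi⟩ = max (prefixMax f i) (f ⟨i.val + 1, hi⟩) := by
  refine le_antisymm (prefixMax_le_iff.2 fun j hj => ?_)
    (max_le (prefixMax_mono (Fin.le_def.2 (Nat.le_succ _))) (le_prefixMax le_rfl))
  rcases eq_or_ne j ⟨i.val + 1, hi⟩ with rfl | hne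
  · exact le_max_right _ _
  · have hj' : j.val ≤ i.val + 1 := hj
    have hne' : j.val ≠ i.val + 1 := fun h => hne (Fin.ext h)
    exact le_max_of_le_left (le_prefixMax (Fin.le_def.2 (by omega)))

lemma prefixMax_succ_of_isBlockEnd {i : Fin n} (h : IsBlockEnd f i) (hi : i.val + 1 < n) :
    prefixMax f ⟨i.val + 1, hi⟩ = f ⟨i.val + 1, hi⟩ := by
  rw [prefixMax_succ hi, max_eq_right (h hi).le]

lemma prefixMax_succ_of_not_isBlockEnd {i : Fin n} (h : ¬IsBlockEnd f i) (hi : i.val + 1 < n) :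
    prefixMax f ⟨i.val + 1, hi⟩ = prefixMax f i := by
  obtain ⟨hi, hle⟩ := not_forall.1 h
  rw [prefixMax_succ hi, max_eq_left (not_lt.1 hle)]

lemma prefixMax_lt_of_isBlockEnd {i j : Fin n} (h : IsBlockEnd f i) (hij : i < j) :
    prefixMax f i < prefixMax f j :=
  (h (by omega)).trans_le (le_prefixMax (Fin.le_def.2 hij))

lemma prefixMax_ne_of_lt (hf : Function.Injective f) {i j : Fin n} (h : i < j) :
    prefixMax f i ≠ f j := by
  obtain ⟨k, hki, hk, -⟩ := exists_eq_prefixMax f i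
  intro hj
  exact absurd (hf (hk.trans hj) ▸ hki) (not_le.2 h)

end PrefixMax

section Transform

variable {n : ℕ} (w : Perm (Fin n))

open scoped Classical in
noncomputable def transformFun (i : Fin n) : Fin n :=
  if h : IsBlockEnd w i then prefixMax w i else w ⟨i.val + 1, (not_forall.1 h).fst⟩

variable {w}

lemma transformFun_of_isBlockEnd {i : Fin n} (h : IsBlockEnd w i) :
    transformFun w i = prefixMax w i := by
  simp [transformFun, h]

lemma transformFun_of_not_isBlockEnd {i : Fin n} (h : ¬IsBlockEnd w i) (hi : i.val + 1 < n) :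
    transformFun w i = w ⟨i.val + 1, hi⟩ := by
  simp [transformFun, h]

lemma prefixMax_symm_transformFun_eq_iff (i : Fin n) :
    prefixMax w (w.symm (transformFun w i)) = transformFun w i ↔ IsBlockEnd w i := by
  by_cases h : IsBlockEnd w i
  · obtain ⟨j, -, hj, hjj⟩ := exists_eq_prefixMax w i
    simp only [transformFun_of_isBlockEnd h, ← hj, symm_apply_apply, hjj, h]
  · obtain ⟨hi, -⟩ := not_forall.1 h
    simp only [transformFun_of_not_isBlockEnd h hi, symm_apply_apply,
      prefixMax_succ_of_not_isBlockEnd h hi, h, iff_false]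
    exact prefixMax_ne_of_lt w.injective (Fin.lt_def.2 (Nat.lt_succ_self _))

lemma transformFun_injective (w : Perm (Fin n)) : Function.Injective (transformFun w) := by
  intro i j hij
  have hend := (prefixMax_symm_transformFun_eq_iff i).symm.trans
    (hij ▸ prefixMax_symm_transformFun_eq_iff j)
  by_cases hi : IsBlockEnd w i
  · have hj := hend.1 hi
    rw [transformFun_of_isBlockEnd hi, transformFun_of_isBlockEnd hj] at hij
    by_contra hne
    rcases lt_or_gt_of_ne hne with hlt | hlt
    · exact (prefixMax_lt_of_isBlockEnd hi hlt).ne hij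
    · exact (prefixMax_lt_of_isBlockEnd hj hlt).ne' hij
  · have hj := mt hend.2 hi
    obtain ⟨hi', -⟩ := not_forall.1 hi
    obtain ⟨hj', -⟩ := not_forall.1 hj
    rw [transformFun_of_not_isBlockEnd hi hi', transformFun_of_not_isBlockEnd hj hj'] at hij
    exact Fin.ext (by simpa using congrArg Fin.val (w.injective hij))

noncomputable def transform (w : Perm (Fin n)) : Perm (Fin n) :=
  w.symm.trans (Equiv.ofBijective _ (transformFun_injective w).bijective_of_finite)

lemma transform_apply_apply (i : Fin n) : transform w (w i) = transformFun w i := by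
  simp [transform]

lemma transform_apply_apply_of_isBlockEnd {i : Fin n} (h : IsBlockEnd w i) :
    transform w (w i) = prefixMax w i := by
  rw [transform_apply_apply, transformFun_of_isBlockEnd h]

lemma transform_apply_apply_of_not_isBlockEnd {i : Fin n} (h : ¬IsBlockEnd w i)
    (hi : i.val + 1 < n) : transform w (w i) = w ⟨i.val + 1, hi⟩ := by
  rw [transform_apply_apply, transformFun_of_not_isBlockEnd h hi]

lemma prefixMax_symm_transform_apply (v : Fin n) :
    prefixMax w (w.symm (transform w v)) = prefixMax w (w.symm v) := by
  obtain ⟨i, rfl⟩ := w.surjective v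
  rw [symm_apply_apply]
  by_cases h : IsBlockEnd w i
  · obtain ⟨j, -, hj, hjj⟩ := exists_eq_prefixMax w i
    rw [transform_apply_apply_of_isBlockEnd h, ← hj, symm_apply_apply, hjj, hj]
  · obtain ⟨hi, -⟩ := not_forall.1 h
    rw [transform_apply_apply_of_not_isBlockEnd h hi, symm_apply_apply,
      prefixMax_succ_of_not_isBlockEnd h hi]

lemma prefixMax_eq_of_sameCycle {i j : Fin n} (h : (transform w).SameCycle (w i) (w j)) :
    prefixMax w i = prefixMax w j := by
  obtain ⟨k, hk⟩ := h.exists_nat_pow_eq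
  have hinv : (prefixMax w ∘ w.symm) ∘ transform w = prefixMax w ∘ w.symm :=
    funext prefixMax_symm_transform_apply
  have := congrFun (Function.iterate_invariant hinv k) (w i)
  simp only [Function.comp_apply, ← coe_pow, hk, symm_apply_apply] at this
  exact this.symm

lemma sameCycle_prefixMax (i : Fin n) : (transform w).SameCycle (prefixMax w i) (w i) := by
  suffices ∀ k (hk : k < n), (transform w).SameCycle (prefixMax w ⟨k, hk⟩) (w ⟨k, hk⟩) from
    this i i.2
  intro k
  induction k with
  | zero => intro hk; rw [prefixMax_of_val_eq_zero rfl]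
  | succ k ih =>
    intro hk
    by_cases h : IsBlockEnd w ⟨k, by omega⟩
    · rw [prefixMax_succ_of_isBlockEnd h hk]
    · rw [prefixMax_succ_of_not_isBlockEnd h hk, ← transform_apply_apply_of_not_isBlockEnd h hk,
        sameCycle_apply_right]
      exact ih _

end Transform

def IsCycleMax {α : Type*} [LE α] (π : Perm α) (v : α) : Prop :=
  ∀ u, π.SameCycle v u → u ≤ v

section Recovery

variable {n : ℕ} {w : Perm (Fin n)}

lemma isCycleMax_transform_iff (i : Fin n) :
    IsCycleMax (transform w) (w i) ↔ prefixMax w i = w i := by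
  refine ⟨fun h => le_antisymm (h _ (sameCycle_prefixMax i).symm) (le_prefixMax le_rfl),
    fun h u hu => ?_⟩
  obtain ⟨j, rfl⟩ := w.surjective u
  rw [← h, prefixMax_eq_of_sameCycle hu]
  exact le_prefixMax le_rfl

lemma isCycleMax_transform_apply_iff (i : Fin n) :
    IsCycleMax (transform w) (transform w (w i)) ↔ IsBlockEnd w i := by
  rw [← apply_symm_apply w (transform w (w i)), isCycleMax_transform_iff, apply_symm_apply,
    transform_apply_apply]
  exact prefixMax_symm_transformFun_eq_iff i

lemma isLeast_isCycleMax_transform (hn : 0 < n) :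
    IsLeast {v | IsCycleMax (transform w) v} (w ⟨0, hn⟩) := by
  have hzero : prefixMax w ⟨0, hn⟩ = w ⟨0, hn⟩ := prefixMax_of_val_eq_zero rfl
  refine ⟨(isCycleMax_transform_iff _).2 hzero, fun v hv => ?_⟩
  obtain ⟨j, rfl⟩ := w.surjective v
  rw [← (isCycleMax_transform_iff j).1 hv, ← hzero]
  exact prefixMax_mono (Fin.le_def.2 (Nat.zero_le _))

lemma isLeast_isCycleMax_transform_gt {i : Fin n} (h : IsBlockEnd w i) (hi : i.val + 1 < n) :
    IsLeast {v | IsCycleMax (transform w) v ∧ transform w (w i) < v} (w ⟨i.val + 1, hi⟩) := by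
  have hsucc := prefixMax_succ_of_isBlockEnd h hi
  rw [transform_apply_apply_of_isBlockEnd h]
  refine ⟨⟨(isCycleMax_transform_iff _).2 hsucc, h hi⟩, ?_⟩
  rintro v ⟨hv, hlt⟩
  obtain ⟨j, rfl⟩ := w.surjective v
  rw [← (isCycleMax_transform_iff j).1 hv] at hlt ⊢
  have hij : i < j := lt_of_not_ge fun hji => hlt.not_ge (prefixMax_mono hji)
  rw [← hsucc]
  exact prefixMax_mono (Fin.le_def.2 hij)

theorem transform_injective : Function.Injective (transform (n := n)) := by
  intro w w' hw
  suffices ∀ k (hk : k < n), w ⟨k, hk⟩ = w' ⟨k, hk⟩ from Equiv.ext fun i => this i i.2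
  intro k
  induction k with
  | zero =>
    intro hk
    exact (isLeast_isCycleMax_transform hk).unique (hw ▸ isLeast_isCycleMax_transform hk)
  | succ k ih =>
    intro hk
    have hi : k < n := by omega
    have hend : IsBlockEnd w ⟨k, hi⟩ ↔ IsBlockEnd w' ⟨k, hi⟩ := by
      rw [← isCycleMax_transform_apply_iff, ← isCycleMax_transform_apply_iff, hw, ih hi]
    by_cases h : IsBlockEnd w ⟨k, hi⟩
    · refine (isLeast_isCycleMax_transform_gt h hk).unique ?_
      rw [hw, ih hi]
      exact isLeast_isCycleMax_transform_gt (hend.1 h) hk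
    · rw [← transform_apply_apply_of_not_isBlockEnd h hk,
        ← transform_apply_apply_of_not_isBlockEnd (mt hend.2 h) hk, hw, ih hi]

end Recovery

lemma transform_apply_apply_lt_iff {n : ℕ} (w : Perm (Fin n)) (i : Fin n) :
    transform w (w i) < w i ↔ ∃ h : i.val + 1 < n, w ⟨i.val + 1, h⟩ < w i := by
  by_cases h : IsBlockEnd w i
  · rw [transform_apply_apply_of_isBlockEnd h]
    refine iff_of_false (not_lt.2 (le_prefixMax le_rfl)) fun ⟨hi, hlt⟩ => ?_
    exact absurd hlt (not_lt.2 ((le_prefixMax le_rfl).trans (h hi).le))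
  · obtain ⟨hi, -⟩ := not_forall.1 h
    rw [transform_apply_apply_of_not_isBlockEnd h hi]
    exact ⟨fun hlt => ⟨hi, hlt⟩, fun ⟨_, hlt⟩ => hlt⟩

theorem desc_eq_exce_inv_transform {n : ℕ} (w : Perm (Fin n)) :
    desc n w = exce n (transform w)⁻¹ :=
  Nat.card_congr <|
    (w.subtypeEquiv (q := fun v => transform w v < v) fun i =>
      (transform_apply_apply_lt_iff w i).symm).trans <|
    (transform w).subtypeEquiv fun v => by simp

end Foata

theorem eulerian_descents_eq_excedances (n m : ℕ) :
    Nat.card {σ : Equiv.Perm (Fin n) // desc n σ = m} =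
      Nat.card {σ : Equiv.Perm (Fin n) // exce n σ = m} := by
  have hbij : Function.Bijective fun w : Perm (Fin n) => (Foata.transform w)⁻¹ :=
    (inv_injective.comp Foata.transform_injective).bijective_of_finite
  exact Nat.card_congr <| (Equiv.ofBijective _ hbij).subtypeEquiv fun w => by
    rw [Foata.desc_eq_exce_inv_transform]
    rfl
end

section
/- Worpitzky's identity: A_n(x)/(1-x)^{n+1} = Σ_{m≥0} (m+1)^n x^m as formal power series, where A_n(x) is the n-th Eulerian polynomial. -/
/-! Sorting a word `f : Fin n → Fin (m + 1)` stably yields the unique permutation `σ` such that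
`f ∘ σ` is weakly increasing and strictly increasing across every descent of `σ`. Adding to the
`i`-th letter the number of ascents of `σ` before position `i` turns these words bijectively into
strictly increasing maps `Fin n → Fin (n + m - des σ)`. Hence
`(m + 1) ^ n = ∑ σ, (n + m - des σ).choose n`, which is the coefficient of `x ^ m` in
`A_n(x) / (1 - x) ^ (n + 1)`, since `1 / (1 - x) ^ (n + 1) = ∑ j, (n + j).choose n * x ^ j`. -/

open Finset PowerSeries

theorem card_orderEmbedding_fin (k N : ℕ) : Fintype.card (Fin k ↪o Fin N) = N.choose k := by
  rw [← Nat.card_eq_fintype_card, Nat.card_congr Set.powersetCard.ofFinEmbEquiv,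
    Set.powersetCard.card, Nat.card_fin]

section Shift

variable {k : ℕ} (D : Finset (Fin k))

def ascentsBefore (i : Fin (k + 1)) : ℕ := #{j ∈ Dᶜ | j.castSucc < i}

@[simp]
theorem ascentsBefore_zero : ascentsBefore D 0 = 0 := by
  simp [ascentsBefore]

theorem ascentsBefore_succ (j : Fin k) :
    ascentsBefore D j.succ = ascentsBefore D j.castSucc + if j ∈ D then 0 else 1 := by
  have : {l ∈ Dᶜ | l.castSucc < j.succ} =
      {l ∈ Dᶜ | l.castSucc < j.castSucc} ∪ {l ∈ Dᶜ | l = j} := by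
    ext l; simp [Fin.castSucc_lt_succ_iff, le_iff_lt_or_eq, and_or_left]
  rw [ascentsBefore, ascentsBefore, this, card_union_of_disjoint]
  · split_ifs with hj <;> simp [filter_eq', hj]
  · exact disjoint_filter.2 fun l _ hl hlj => (hlj ▸ hl).ne rfl

theorem ascentsBefore_le (i : Fin (k + 1)) : ascentsBefore D i ≤ k - #D :=
  (card_filter_le _ _).trans (by rw [card_compl, Fintype.card_fin])

theorem ascentsBefore_last : ascentsBefore D (Fin.last k) = k - #D := by
  simp [ascentsBefore, Fin.castSucc_lt_last, card_compl]

variable {D} in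
theorem strictMono_add_ascentsBefore {g : Fin (k + 1) → ℕ} (hg : Monotone g)
    (hD : ∀ j ∈ D, g j.castSucc < g j.succ) : StrictMono fun i => g i + ascentsBefore D i := by
  refine Fin.strictMono_iff_lt_succ.2 fun j => ?_
  have := hg j.castSucc_le_succ
  have := ascentsBefore_succ D j
  split_ifs at this with hj
  · have := hD j hj; omega
  · omega

theorem ascentsBefore_le_of_strictMono {h : Fin (k + 1) → ℕ} (hh : StrictMono h)
    (i : Fin (k + 1)) :
    ascentsBefore D i ≤ h i := by
  induction i using Fin.induction with
  | zero => simp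
  | succ j ih =>
    have := hh j.castSucc_lt_succ
    have := ascentsBefore_succ D j
    split_ifs at this <;> omega

theorem sub_ascentsBefore_succ {h : Fin (k + 1) → ℕ} (hh : StrictMono h) (j : Fin k) :
    h j.castSucc - ascentsBefore D j.castSucc + (if j ∈ D then 1 else 0) ≤
      h j.succ - ascentsBefore D j.succ := by
  have := hh j.castSucc_lt_succ
  have := ascentsBefore_le_of_strictMono D hh j.castSucc
  have := ascentsBefore_succ D j
  split_ifs at * <;> omega

theorem monotone_sub_ascentsBefore {h : Fin (k + 1) → ℕ} (hh : StrictMono h) :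
    Monotone fun i => h i - ascentsBefore D i :=
  Fin.monotone_iff_le_succ.2 fun j => le_of_add_le_left (sub_ascentsBefore_succ D hh j)

theorem card_monotone_with_strict_steps (M : ℕ) :
    Fintype.card {g : Fin (k + 1) → Fin M // Monotone g ∧ ∀ j ∈ D, g j.castSucc < g j.succ} =
      (M + k - #D).choose (k + 1) := by
  have hD : #D ≤ k := (card_le_univ D).trans_eq (Fintype.card_fin k)
  let e : {g : Fin (k + 1) → Fin M // Monotone g ∧ ∀ j ∈ D, g j.castSucc < g j.succ} ≃
      (Fin (k + 1) ↪o Fin (M + k - #D)) :=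
    { toFun g := OrderEmbedding.ofStrictMono
        (fun i => ⟨g.1 i + ascentsBefore D i, by
          have := (g.1 i).2; have := ascentsBefore_le D i; omega⟩)
        fun _ _ hab => strictMono_add_ascentsBefore (g := fun i => (g.1 i : ℕ)) g.2.1 g.2.2 hab
      invFun h :=
        have hh : StrictMono fun i => (h i : ℕ) := Fin.val_strictMono.comp h.strictMono
        ⟨fun i => ⟨h i - ascentsBefore D i, by
          have hle : (h i : ℕ) - ascentsBefore D i ≤
              h (Fin.last k) - ascentsBefore D (Fin.last k) :=
            monotone_sub_ascentsBefore D hh (Fin.le_last i)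
          have := (h (Fin.last k)).2
          have := ascentsBefore_le_of_strictMono D hh (Fin.last k)
          rw [ascentsBefore_last] at hle this
          omega⟩,
        Fin.monotone_iff_le_succ.2 fun j => by
          simpa using le_of_add_le_left (sub_ascentsBefore_succ D hh j),
        fun j hj => by simpa [hj] using sub_ascentsBefore_succ D hh j⟩
      left_inv g := by ext; exact Nat.add_sub_cancel ..
      right_inv h := by
        ext i
        exact Nat.sub_add_cancel
          (ascentsBefore_le_of_strictMono D (Fin.val_strictMono.comp h.strictMono) i) }
  rw [Fintype.card_congr e, card_orderEmbedding_fin]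

end Shift

section Descents

variable {k : ℕ}

def descents (σ : Equiv.Perm (Fin (k + 1))) : Finset (Fin k) := {j | σ j.succ < σ j.castSucc}

theorem desc_succ_eq_card_descents (σ : Equiv.Perm (Fin (k + 1))) :
    desc (k + 1) σ = #(descents σ) := by
  rw [desc, descents, ← Fintype.card_subtype, ← Nat.card_eq_fintype_card]
  exact Nat.card_congr
    { toFun i := ⟨⟨i.1, by obtain ⟨h, -⟩ := i.2; omega⟩, i.2.2⟩
      invFun j := ⟨j.1.castSucc, Nat.succ_lt_succ j.1.2, j.2⟩
      left_inv i := rfl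
      right_inv j := rfl }

theorem eq_sort_iff_descents {α : Type*} [LinearOrder α] {f : Fin (k + 1) → α}
    {σ : Equiv.Perm (Fin (k + 1))} :
    σ = Tuple.sort f ↔ Monotone (f ∘ σ) ∧ ∀ j ∈ descents σ, f (σ j.castSucc) < f (σ j.succ) := by
  rw [Tuple.eq_sort_iff]
  refine and_congr_right fun hmono => ⟨fun h j hj => ?_, fun h i i' hii' heq => ?_⟩
  · refine (hmono j.castSucc_le_succ).lt_of_ne fun heq => ?_
    exact lt_asymm (h _ _ j.castSucc_lt_succ heq) (mem_filter.1 hj).2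
  · have : StrictMonoOn σ (Set.Icc i i') := by
      refine strictMonoOn_of_lt_succ Set.ordConnected_Icc fun a ha hai ha' => ?_
      obtain ⟨j, rfl⟩ : ∃ j : Fin k, j.castSucc = a :=
        Fin.exists_castSucc_eq.2 fun h => ha (h ▸ Fin.top_eq_last k ▸ isMax_top)
      rw [Fin.orderSucc_castSucc] at ha' ⊢
      have hflat : f (σ j.castSucc) = f (σ j.succ) :=
        le_antisymm (hmono j.castSucc_le_succ)
          (((hmono ha'.2).trans heq.ge).trans (hmono hai.1))
      refine lt_of_le_of_ne (not_lt.1 fun hlt => ?_) (σ.injective.ne j.castSucc_lt_succ.ne)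
      exact (h j (mem_filter.2 ⟨mem_univ _, hlt⟩)).ne hflat
    exact this ⟨le_rfl, hii'.le⟩ ⟨hii'.le, le_rfl⟩ hii'

theorem card_sort_eq (σ : Equiv.Perm (Fin (k + 1))) (M : ℕ) :
    Fintype.card {f : Fin (k + 1) → Fin M // Tuple.sort f = σ} =
      (M + k - desc (k + 1) σ).choose (k + 1) := by
  rw [desc_succ_eq_card_descents, ← card_monotone_with_strict_steps]
  refine Fintype.card_congr (Equiv.subtypeEquiv (σ.symm.arrowCongr (Equiv.refl _)) fun f => ?_)
  rw [eq_comm, eq_sort_iff_descents]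
  rfl

end Descents

theorem desc_le (n : ℕ) (σ : Equiv.Perm (Fin n)) : desc n σ ≤ n :=
  (Finite.card_subtype_le _).trans (Nat.card_fin n).le

theorem sum_choose_add_sub_desc (n m : ℕ) :
    ∑ σ : Equiv.Perm (Fin n), (n + m - desc n σ).choose n = (m + 1) ^ n := by
  cases n with
  | zero => simp
  | succ k =>
    calc ∑ σ : Equiv.Perm (Fin (k + 1)), (k + 1 + m - desc (k + 1) σ).choose (k + 1)
        = ∑ σ, Fintype.card {f : Fin (k + 1) → Fin (m + 1) // Tuple.sort f = σ} := by
          refine sum_congr rfl fun σ _ => ?_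
          rw [card_sort_eq]; congr 2; omega
      _ = (m + 1) ^ (k + 1) := by
          rw [← Fintype.card_sigma, Fintype.card_congr (Equiv.sigmaFiberEquiv _)]
          simp

theorem X_pow_mul_mk_add_choose {R : Type*} [CommSemiring R] {d n : ℕ} (hd : d ≤ n) :
    (X ^ d : R⟦X⟧) * mk (fun j => ((n + j).choose n : R)) =
      mk (fun j => ((n + j - d).choose n : R)) := by
  ext j
  rw [coeff_X_pow_mul', coeff_mk, coeff_mk]
  split_ifs with hdj
  · congr 2; omega
  · rw [Nat.choose_eq_zero_of_lt (by omega), Nat.cast_zero]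

theorem worpitzky (n : ℕ) :
    ((∑ σ : Equiv.Perm (Fin n), Polynomial.X ^ desc n σ : Polynomial ℤ) : PowerSeries ℤ) =
      (1 - PowerSeries.X) ^ (n + 1) * PowerSeries.mk (fun m => ((m : ℤ) + 1) ^ n) := by
  have hcoe : ((∑ σ : Equiv.Perm (Fin n), Polynomial.X ^ desc n σ : Polynomial ℤ) : ℤ⟦X⟧) =
      ∑ σ : Equiv.Perm (Fin n), X ^ desc n σ := by
    rw [← Polynomial.coeToPowerSeries.ringHom_apply, map_sum]
    simp
  have hmk : PowerSeries.mk (fun m => ((m : ℤ) + 1) ^ n) =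
      (∑ σ : Equiv.Perm (Fin n), X ^ desc n σ) *
        PowerSeries.mk fun j => ((n + j).choose n : ℤ) := by
    simp_rw [sum_mul, X_pow_mul_mk_add_choose (desc_le n _)]
    ext m
    rw [map_sum]
    simp only [coeff_mk]
    exact_mod_cast (sum_choose_add_sub_desc n m).symm
  rw [hcoe, hmk, mul_left_comm, mul_comm _ (PowerSeries.mk _), mk_add_choose_mul_one_sub_pow_eq_one,
    mul_one]
end

section
/- If X and Y are directed acyclic graphs on n vertices, then DFS(X,Y) is acyclic. -/
/-!
Rank each vertex of the acyclic digraphs `X` and `Y` by its number of ancestors, so that edges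
strictly increase rank: `f a < f b` for `a → b` in `X`, and `g` likewise for `Y`. The potential
`Φ σ = ∑ u, f u * g (σ u)` strictly decreases along every edge `σ → σ ∘ (a b)` of `DFS(X,Y)`,
since by the rearrangement identity it drops by `(f b - f a) * (g (σ b) - g (σ a)) > 0`.
Hence `DFS(X,Y)` has no directed cycle.
-/

namespace Relation

theorem exists_rank_of_transGen_irrefl {α : Type*} [Finite α] {R : α → α → Prop}
    (hR : ∀ a, ¬ TransGen R a a) : ∃ f : α → ℕ, ∀ a b, R a b → f a < f b := by
  refine ⟨fun a => {c | TransGen R c a}.ncard, fun a b hab => Set.ncard_lt_ncard ?_⟩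
  exact ⟨fun c hc => TransGen.tail hc hab, fun hsub => hR a (hsub (TransGen.single hab))⟩

theorem transGen_irrefl_of_strictAnti {α R : Type*} [Preorder R] {r : α → α → Prop} (Φ : α → R)
    (hΦ : ∀ a b, r a b → Φ b < Φ a) (a : α) : ¬ TransGen r a a := fun h => by
  have hlt : TransGen (· > ·) (Φ a) (Φ a) := h.lift Φ hΦ
  rw [transGen_eq_self] at hlt
  exact lt_irrefl _ hlt

end Relation

section Potential

variable {α β R : Type*} [Fintype α] [DecidableEq α] [CommRing R]

theorem sum_mul_comp_swap_trans (f : α → R) (g : β → R) (σ : α ≃ β) {a b : α} (hab : a ≠ b) :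
    ∑ u, f u * g (((Equiv.swap a b).trans σ) u)
      = ∑ u, f u * g (σ u) - (f b - f a) * (g (σ b) - g (σ a)) := by
  have hdiff : ∑ u, f u * g (σ u) - ∑ u, f u * g (((Equiv.swap a b).trans σ) u)
      = f a * (g (σ a) - g (σ b)) + f b * (g (σ b) - g (σ a)) := by
    rw [← Finset.sum_sub_distrib, Fintype.sum_eq_add a b hab]
    · simp [Equiv.swap_apply_left, Equiv.swap_apply_right, mul_sub]
    · rintro u ⟨hua, hub⟩
      simp [Equiv.swap_apply_of_ne_of_ne hua hub]
  linear_combination -hdiff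

theorem sum_mul_comp_lt_of_dfsAdj [LinearOrder R] [IsStrictOrderedRing R]
    {X : α → α → Prop} {Y : β → β → Prop} {f : α → R} {g : β → R}
    (hf : ∀ a b, X a b → f a < f b) (hg : ∀ a b, Y a b → g a < g b) {σ φ : α ≃ β}
    (h : dfsAdj X Y σ φ) : ∑ u, f u * g (φ u) < ∑ u, f u * g (σ u) := by
  obtain ⟨a, b, hX, hY, rfl⟩ := h
  have hab : a ≠ b := fun h => (hf a b hX).ne (congrArg f h)
  rw [sum_mul_comp_swap_trans f g σ hab, sub_lt_self_iff]
  exact mul_pos (sub_pos.2 (hf a b hX)) (sub_pos.2 (hg _ _ hY))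

end Potential

theorem dfsAdj_transGen_irrefl {α β : Type*} [Fintype α] [DecidableEq α] [Finite β]
    {X : α → α → Prop} {Y : β → β → Prop}
    (hX : ∀ a, ¬ Relation.TransGen X a a) (hY : ∀ a, ¬ Relation.TransGen Y a a) (σ : α ≃ β) :
    ¬ Relation.TransGen (dfsAdj X Y) σ σ := by
  obtain ⟨f, hf⟩ := Relation.exists_rank_of_transGen_irrefl hX
  obtain ⟨g, hg⟩ := Relation.exists_rank_of_transGen_irrefl hY
  refine Relation.transGen_irrefl_of_strictAnti (fun φ => ∑ u, (f u : ℤ) * (g (φ u) : ℤ)) ?_ σ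
  exact fun σ φ => sum_mul_comp_lt_of_dfsAdj (f := fun a => (f a : ℤ)) (g := fun b => (g b : ℤ))
    (fun a b h => by exact_mod_cast hf a b h) (fun a b h => by exact_mod_cast hg a b h)

theorem dfs_acyclic (n : ℕ) (X Y : Fin n → Fin n → Prop)
    (hX : ∀ a, ¬ Relation.TransGen X a a) (hY : ∀ a, ¬ Relation.TransGen Y a a) :
    ∀ σ : Fin n ≃ Fin n, ¬ Relation.TransGen (dfsAdj X Y) σ σ :=
  dfsAdj_transGen_irrefl hX hY
end

section
/- The directed friends-and-seats graph DFS(Tour_n, Tour_n) is acyclic; concretely, the function f(σ) = Σ_{i=1}^n i·σ(i) strictly decreases along every directed edge of DFS(Tour_n, Tour_n). -/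
/-!
Moving along an edge σ → σ ∘ (a b) with b < a and σ b < σ a exchanges the seats of a
comparable pair, so by the rearrangement identity the potential Σ i · σ(i) drops by
(a - b)(σ a - σ b) > 0. A strictly decreasing integer potential rules out directed cycles.
-/

theorem Fintype.sum_comp_swap_add_add {α β M : Type*} [Fintype α] [DecidableEq α]
    [AddCommMonoid M] (F : α → β → M) (σ : α → β) {a b : α} (hab : a ≠ b) :
    ∑ i, F i (σ (Equiv.swap a b i)) + F a (σ a) + F b (σ b) =
      ∑ i, F i (σ i) + F a (σ b) + F b (σ a) := by
  have hb : b ∈ Finset.univ.erase a := Finset.mem_erase.mpr ⟨hab.symm, Finset.mem_univ b⟩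
  have hrest : ∀ i ∈ (Finset.univ.erase a).erase b, F i (σ (Equiv.swap a b i)) = F i (σ i) := by
    intro i hi
    obtain ⟨hib, hia, -⟩ := by simpa only [Finset.mem_erase] using hi
    rw [Equiv.swap_apply_of_ne_of_ne hia hib]
  rw [← Finset.sum_erase_add _ _ (Finset.mem_univ a), ← Finset.sum_erase_add _ _ hb,
    ← Finset.sum_erase_add _ _ (Finset.mem_univ a), ← Finset.sum_erase_add _ _ hb,
    Finset.sum_congr rfl hrest, Equiv.swap_apply_left, Equiv.swap_apply_right]
  abel

theorem sum_mul_comp_swap_lt {α β R : Type*} [Fintype α] [DecidableEq α] [CommRing R]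
    [LinearOrder R] [IsStrictOrderedRing R] (w : α → R) (v : β → R) (σ : α → β) {a b : α}
    (hw : w b < w a) (hv : v (σ b) < v (σ a)) :
    ∑ i, w i * v (σ (Equiv.swap a b i)) < ∑ i, w i * v (σ i) := by
  have hab : a ≠ b := fun h => hw.ne (h ▸ rfl)
  have hswap := Fintype.sum_comp_swap_add_add (fun i y => w i * v y) σ hab
  have hgain : 0 < (w a - w b) * (v (σ a) - v (σ b)) := mul_pos (sub_pos.2 hw) (sub_pos.2 hv)
  linear_combination hswap + hgain

theorem sum_mul_lt_of_dfsAdj_gt {α β R : Type*} [LinearOrder α] [Fintype α] [LinearOrder β]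
    [CommRing R] [LinearOrder R] [IsStrictOrderedRing R] {w : α → R} {v : β → R}
    (hw : StrictMono w) (hv : StrictMono v) {σ φ : α ≃ β}
    (h : dfsAdj (fun i j : α => j < i) (fun x y : β => y < x) σ φ) :
    ∑ i, w i * v (φ i) < ∑ i, w i * v (σ i) := by
  obtain ⟨a, b, hba, hσ, rfl⟩ := h
  exact sum_mul_comp_swap_lt w v σ (hw hba) (hv hσ)

theorem Relation.not_transGen_self_of_lt {α β : Type*} [Preorder β] {r : α → α → Prop} (f : α → β)
    (hf : ∀ x y, r x y → f y < f x) (x : α) : ¬ Relation.TransGen r x x := fun h =>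
  lt_irrefl (f x) <| by
    simpa only [Relation.transGen_eq_self] using h.lift f (r := r) (p := (· > ·)) hf

theorem dfs_tour_tour_acyclic (n : ℕ) :
    (∀ σ φ : Fin n ≃ Fin n, dfsAdj (Tour n) (Tour n) σ φ →
        (∑ i : Fin n, ((i.val : ℤ) + 1) * (((φ i).val : ℤ) + 1)) <
          ∑ i : Fin n, ((i.val : ℤ) + 1) * (((σ i).val : ℤ) + 1)) ∧
      ∀ σ : Fin n ≃ Fin n, ¬ Relation.TransGen (dfsAdj (Tour n) (Tour n)) σ σ := by
  have hrank : StrictMono fun i : Fin n => (i.val : ℤ) + 1 := fun _ _ hij =>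
    add_lt_add_left (Nat.cast_lt.2 hij) 1
  have hdecr : ∀ σ φ : Fin n ≃ Fin n, dfsAdj (Tour n) (Tour n) σ φ →
      (∑ i : Fin n, ((i.val : ℤ) + 1) * (((φ i).val : ℤ) + 1)) <
        ∑ i : Fin n, ((i.val : ℤ) + 1) * (((σ i).val : ℤ) + 1) :=
    fun σ φ h => sum_mul_lt_of_dfsAdj_gt hrank hrank h
  exact ⟨hdecr, Relation.not_transGen_self_of_lt _ hdecr⟩
end

section
/- For any directed graphs X, Y on n vertices, ODP(X,Y) = ODP(Y,X). -/
/-! Inversion `σ ↦ σ⁻¹` is an isomorphism from `DFS(X,Y)` onto `DFS(Y,X)`: the edge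
`σ → σ ∘ (a b)` corresponds to `σ⁻¹ → σ⁻¹ ∘ (σa σb)`, since conjugating a transposition by `σ`
gives a transposition. In particular inversion preserves out-degrees. -/

lemma Equiv.swap_trans_symm {α β : Type*} [DecidableEq α] [DecidableEq β] (σ : α ≃ β) (a b : α) :
    ((Equiv.swap a b).trans σ).symm = (Equiv.swap (σ a) (σ b)).trans σ.symm := by
  rw [Equiv.symm_trans, Equiv.symm_swap, ← Equiv.symm_trans_swap_trans a b σ, Equiv.trans_assoc,
    Equiv.self_trans_symm, Equiv.trans_refl]

lemma dfsAdj.symm {α β : Type*} [DecidableEq α] [DecidableEq β]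
    {X : α → α → Prop} {Y : β → β → Prop} {σ φ : α ≃ β}
    (h : dfsAdj X Y σ φ) : dfsAdj Y X σ.symm φ.symm := by
  obtain ⟨a, b, hX, hY, rfl⟩ := h
  exact ⟨σ a, σ b, hY, by simpa using hX, Equiv.swap_trans_symm σ a b⟩

lemma dfsAdj_symm_iff {α β : Type*} [DecidableEq α] [DecidableEq β]
    {X : α → α → Prop} {Y : β → β → Prop} {σ φ : α ≃ β} :
    dfsAdj Y X σ.symm φ.symm ↔ dfsAdj X Y σ φ :=
  ⟨fun h => by simpa using h.symm, dfsAdj.symm⟩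

lemma outdeg_symm {α β : Type*} [DecidableEq α] [DecidableEq β]
    (X : α → α → Prop) (Y : β → β → Prop) (σ : α ≃ β) :
    outdeg X Y σ = outdeg Y X σ.symm :=
  Nat.card_congr <| Equiv.subtypeEquiv (Equiv.symmEquiv α β) fun _ => dfsAdj_symm_iff.symm

theorem ODP_comm {α β : Type*} [Fintype α] [Fintype β] [DecidableEq α] [DecidableEq β]
    (X : α → α → Prop) (Y : β → β → Prop) : ODP X Y = ODP Y X :=
  Fintype.sum_equiv (Equiv.symmEquiv α β) _ _ fun σ => congrArg _ (outdeg_symm X Y σ)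

theorem odp_symm (n : ℕ) (X Y : Fin n → Fin n → Prop) : ODP X Y = ODP Y X :=
  ODP_comm X Y
end

section
/- For n ≥ 2, the cyclic Eulerian polynomial satisfies C_n(x) = n·x·A_{n−1}(x), where A_{n−1}(x) is the (n−1)-st Eulerian polynomial. -/
open Equiv Polynomial

def extendLast {n : ℕ} (τ : Perm (Fin n)) : Perm (Fin (n + 1)) :=
  finSuccEquivLast.trans (τ.optionCongr.trans finSuccEquivLast.symm)

section extendLast

variable {n : ℕ} (τ : Perm (Fin n))

@[simp]
lemma extendLast_castSucc (j : Fin n) : extendLast τ j.castSucc = (τ j).castSucc := by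
  simp [extendLast]

@[simp]
lemma extendLast_last : extendLast τ (Fin.last n) = Fin.last n := by
  simp [extendLast]

lemma extendLast_injective : Function.Injective (extendLast (n := n)) := fun τ τ' h =>
  Equiv.ext fun j => Fin.castSucc_injective _ <| by
    simpa using congrArg (fun σ : Perm (Fin (n + 1)) => σ j.castSucc) h

lemma extendLast_apply_eq_last_iff {i : Fin (n + 1)} :
    extendLast τ i = Fin.last n ↔ i = Fin.last n :=
  (extendLast τ).injective.eq_iff' (extendLast_last τ)

end extendLast

lemma cyclicSucc_eq_finRotate {n : ℕ} (i : Fin n) : cyclicSucc i = finRotate n i := by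
  cases n with
  | zero => exact i.elim0
  | succ n =>
    rw [finRotate_apply]
    ext
    simp [Fin.val_add, cyclicSucc]

lemma cyclicSucc_castSucc {n : ℕ} (j : Fin (n + 1)) : cyclicSucc j.castSucc = j.succ := by
  ext
  simp [cyclicSucc, Nat.mod_eq_of_lt (Nat.succ_lt_succ j.isLt)]

lemma cyclicSucc_last (n : ℕ) : cyclicSucc (Fin.last n) = 0 := by
  ext
  simp [cyclicSucc]

open Fin.NatCast in
lemma finRotate_pow_apply {n : ℕ} (k : ℕ) (i : Fin (n + 1)) :
    (finRotate (n + 1) ^ k) i = i + k := by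
  induction k with
  | zero => simp
  | succ k ih =>
    rw [pow_succ', Perm.mul_apply, ih, finRotate_apply, Nat.cast_succ, add_assoc]

lemma cdes_mul_finRotate {n : ℕ} (σ : Perm (Fin n)) : cdes n (σ * finRotate n) = cdes n σ :=
  Nat.card_congr <| (finRotate n).subtypeEquiv fun i => by
    simp only [Perm.mul_apply, cyclicSucc_eq_finRotate]

lemma cdes_mul_finRotate_pow {n : ℕ} (σ : Perm (Fin n)) (k : ℕ) :
    cdes n (σ * finRotate n ^ k) = cdes n σ := by
  induction k with
  | zero => simp
  | succ k ih => rw [pow_succ, ← mul_assoc, cdes_mul_finRotate, ih]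

lemma extendLast_cyclicSucc_castSucc_lt_iff {n : ℕ} (τ : Perm (Fin (n + 1))) (j : Fin (n + 1)) :
    extendLast τ (cyclicSucc j.castSucc) < extendLast τ j.castSucc ↔
      ∃ h : j.val + 1 < n + 1, τ ⟨j.val + 1, h⟩ < τ j := by
  rw [cyclicSucc_castSucc]
  induction j using Fin.lastCases with
  | last => simp [Fin.le_last]
  | cast j =>
    rw [Fin.succ_castSucc, extendLast_castSucc, extendLast_castSucc,
      Fin.castSucc_lt_castSucc_iff, exists_prop_of_true (by simp)]
    rfl

lemma cdes_extendLast {n : ℕ} (τ : Perm (Fin (n + 1))) :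
    cdes (n + 2) (extendLast τ) = desc (n + 1) τ + 1 := by
  simp only [cdes, desc, Nat.card_eq_fintype_card, Fintype.card_subtype, Finset.card_filter]
  rw [Fin.sum_univ_castSucc]
  simp only [extendLast_cyclicSucc_castSucc_lt_iff, cyclicSucc_last]
  rw [← Fin.castSucc_zero, extendLast_castSucc, extendLast_last,
    if_pos (Fin.castSucc_lt_last _)]

section rotateExtendLast

variable {n : ℕ}

def rotateExtendLast (p : Fin (n + 2) × Perm (Fin (n + 1))) : Perm (Fin (n + 2)) :=
  extendLast p.2 * finRotate (n + 2) ^ (p.1 : ℕ)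

lemma rotateExtendLast_apply_eq_last_iff (p : Fin (n + 2) × Perm (Fin (n + 1)))
    (i : Fin (n + 2)) : rotateExtendLast p i = Fin.last (n + 1) ↔ i + p.1 = Fin.last (n + 1) := by
  rw [rotateExtendLast, Perm.mul_apply, extendLast_apply_eq_last_iff, finRotate_pow_apply,
    Fin.cast_val_eq_self]

lemma rotateExtendLast_injective : Function.Injective (rotateExtendLast (n := n)) := by
  rintro ⟨k, τ⟩ ⟨k', τ'⟩ h
  have hk : k' = k := by
    have := rotateExtendLast_apply_eq_last_iff (k', τ') (Fin.last _ - k)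
    rw [← h, rotateExtendLast_apply_eq_last_iff] at this
    exact add_left_cancel ((this.1 (sub_add_cancel _ _)).trans (sub_add_cancel _ _).symm)
  subst hk
  exact Prod.ext rfl (extendLast_injective (mul_right_cancel h))

lemma rotateExtendLast_bijective : Function.Bijective (rotateExtendLast (n := n)) := by
  rw [Fintype.bijective_iff_injective_and_card]
  refine ⟨rotateExtendLast_injective, ?_⟩
  simp [Fintype.card_perm, Nat.factorial_succ]

lemma cdes_rotateExtendLast (p : Fin (n + 2) × Perm (Fin (n + 1))) :
    cdes (n + 2) (rotateExtendLast p) = desc (n + 1) p.2 + 1 := by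
  rw [rotateExtendLast, cdes_mul_finRotate_pow, cdes_extendLast]

end rotateExtendLast

lemma sum_pow_cdes {R : Type*} [CommSemiring R] (x : R) (n : ℕ) :
    ∑ σ : Perm (Fin (n + 2)), x ^ cdes (n + 2) σ =
      ((n + 2 : ℕ) : R) * x * ∑ τ : Perm (Fin (n + 1)), x ^ desc (n + 1) τ := by
  rw [← rotateExtendLast_bijective.sum_comp, Fintype.sum_prod_type]
  simp only [cdes_rotateExtendLast, pow_succ, Finset.sum_const, Finset.card_univ,
    Fintype.card_fin, nsmul_eq_mul, ← Finset.sum_mul]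
  ring

theorem cyclic_eulerian_factorization (n : ℕ) (hn : 2 ≤ n) :
    (∑ σ : Equiv.Perm (Fin n), (Polynomial.X : Polynomial ℤ) ^ cdes n σ) =
      (n : Polynomial ℤ) * Polynomial.X *
        ∑ τ : Equiv.Perm (Fin (n - 1)), Polynomial.X ^ desc (n - 1) τ := by
  obtain ⟨m, rfl⟩ := Nat.exists_eq_add_of_le' hn
  exact sum_pow_cdes X m
end

section
/- For each 1 ≤ i ≤ n−1, Σ x^{outdeg(σ)} over permutations σ with σ(i) = n in DFS(Tour_n, Cycle_n) equals Σ x^{outdeg(σ)} over permutations σ with σ(1) = n; equivalently, the number of permutations σ of [n] with σ(i) = n and exactly k cyclic descents is independent of i. -/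
/-!
Precomposing with the rotation `j ↦ j + i` moves position `i` to position `0` and preserves cyclic
descents. The out-degree of `σ` in `DFS(Tour n, DCycle n)` is the number of cyclic descents of
`σ⁻¹`, and that count is also invariant under rotating values: `n · cdes τ` is the sum over `j` of
the residues of `τ (j + 1) - τ j` modulo `n`, because the integer differences telescope to `0`
and every descent adds a wrap-around of `n`.
-/
open Equiv

lemma cyclicSucc_eq_add_one {n : ℕ} [NeZero n] (x : Fin n) : cyclicSucc x = x + 1 := by
  ext
  simp [cyclicSucc, Fin.val_add]

lemma Fin.intCast_val_sub {n : ℕ} (a b : Fin n) :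
    ((a - b : Fin n) : ℤ) = a - b + if a < b then (n : ℤ) else 0 := by
  split_ifs with h
  · rw [Fin.coe_sub_iff_lt.mpr h]
    omega
  · rw [Fin.sub_val_of_le (not_lt.mp h)]
    omega

lemma mul_cdes_eq_sum_sub {n : ℕ} [NeZero n] (τ : Perm (Fin n)) :
    (n : ℤ) * cdes n τ = ∑ j, ((τ (j + 1) - τ j : Fin n) : ℤ) := by
  have telescope : ∑ j, ((τ (j + 1) : ℕ) : ℤ) = ∑ j, ((τ j : ℕ) : ℤ) :=
    Fintype.sum_equiv (Equiv.addRight 1) _ _ fun _ => rfl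
  simp only [Fin.intCast_val_sub, Finset.sum_add_distrib, Finset.sum_sub_distrib, telescope,
    sub_self, zero_add, Finset.sum_ite, Finset.sum_const_zero, add_zero, Finset.sum_const,
    nsmul_eq_mul, cdes, Nat.card_eq_fintype_card, Fintype.card_subtype, cyclicSucc_eq_add_one]
  ring

lemma cdes_addRight_mul {n : ℕ} [NeZero n] (c : Fin n) (τ : Perm (Fin n)) :
    cdes n (Equiv.addRight c * τ) = cdes n τ := by
  have h : (n : ℤ) * cdes n (Equiv.addRight c * τ) = n * cdes n τ := by
    simp only [mul_cdes_eq_sum_sub, Perm.mul_apply, coe_addRight, add_sub_add_right_eq_sub]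
  exact_mod_cast mul_left_cancel₀ (by exact_mod_cast NeZero.ne n) h

lemma cdes_mul_addRight {n : ℕ} [NeZero n] (σ : Perm (Fin n)) (c : Fin n) :
    cdes n (σ * Equiv.addRight c) = cdes n σ :=
  Nat.card_congr <| Equiv.subtypeEquiv (Equiv.addRight c) fun j => by
    simp [cyclicSucc_eq_add_one, add_right_comm]

lemma swap_eq_swap_of_ne {α : Type*} [DecidableEq α] {a b c d : α} (hab : a ≠ b)
    (h : swap a b = swap c d) : a = c ∧ b = d ∨ a = d ∧ b = c := by
  have hb : swap c d a = b := by rw [← h, swap_apply_left]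
  rw [swap_apply_def] at hb
  split_ifs at hb with hac had
  · exact .inl ⟨hac, hb.symm⟩
  · exact .inr ⟨had, hb.symm⟩
  · exact absurd hb hab

lemma outdeg_eq_card_edges {α β : Type*} [DecidableEq α] {X : α → α → Prop}
    (hX : ∀ a b, X a b → ¬ X b a) (Y : β → β → Prop) (σ : α ≃ β) :
    outdeg X Y σ = Nat.card {e : α × α // X e.1 e.2 ∧ Y (σ e.1) (σ e.2)} := by
  refine (Nat.card_congr (Equiv.ofBijective
    (fun e => ⟨(swap e.1.1 e.1.2).trans σ, e.1.1, e.1.2, e.2.1, e.2.2, rfl⟩) ⟨?_, ?_⟩)).symm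
  · rintro ⟨⟨a, b⟩, hab, _⟩ ⟨⟨c, d⟩, hcd, _⟩ h
    have hne : a ≠ b := by rintro rfl; exact hX a a hab hab
    have hswap : swap a b = swap c d := by
      simpa [trans_assoc] using congrArg (fun φ : {φ // dfsAdj X Y σ φ} => φ.1.trans σ.symm) h
    rcases swap_eq_swap_of_ne hne hswap with ⟨rfl, rfl⟩ | ⟨rfl, rfl⟩
    · rfl
    · exact absurd hab (hX _ _ hcd)
  · rintro ⟨φ, a, b, hab, hY, rfl⟩
    exact ⟨⟨(a, b), hab, hY⟩, rfl⟩

lemma outdeg_tour_dcycle {n : ℕ} (σ : Perm (Fin n)) :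
    outdeg (Tour n) (DCycle n) σ = cdes n σ⁻¹ := by
  rw [outdeg_eq_card_edges (X := Tour n) fun _ _ => lt_asymm]
  refine Nat.card_congr
    { toFun := fun e => ⟨σ e.1.1, ?_⟩
      invFun := fun i => ⟨(σ⁻¹ i, σ⁻¹ (cyclicSucc i)), i.2, by simp [DCycle]⟩
      left_inv := ?_
      right_inv := fun i => by simp }
  · obtain ⟨⟨a, b⟩, hab, hY⟩ := e
    simpa [Tour, ← show σ b = cyclicSucc (σ a) from hY] using hab
  · rintro ⟨⟨a, b⟩, hab, hY⟩
    simp [← show σ b = cyclicSucc (σ a) from hY]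

lemma outdeg_tour_dcycle_mul_addRight {n : ℕ} [NeZero n] (σ : Perm (Fin n)) (c : Fin n) :
    outdeg (Tour n) (DCycle n) (σ * Equiv.addRight c) = outdeg (Tour n) (DCycle n) σ := by
  rw [outdeg_tour_dcycle, outdeg_tour_dcycle, mul_inv_rev, Perm.inv_def (Equiv.addRight c),
    addRight_symm, cdes_addRight_mul]

theorem cycle_rotation_invariance_general (n : ℕ) (hn : 0 < n) (i : Fin n) :
    ODPc (Tour n) (DCycle n)
        (fun σ => σ i = ⟨n - 1, Nat.sub_lt hn Nat.one_pos⟩) =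
      ODPc (Tour n) (DCycle n)
        (fun σ => σ ⟨0, hn⟩ = ⟨n - 1, Nat.sub_lt hn Nat.one_pos⟩) ∧
      ∀ k : ℕ,
        Nat.card {σ : Equiv.Perm (Fin n) //
            σ i = ⟨n - 1, Nat.sub_lt hn Nat.one_pos⟩ ∧ cdes n σ = k} =
          Nat.card {σ : Equiv.Perm (Fin n) //
            σ ⟨0, hn⟩ = ⟨n - 1, Nat.sub_lt hn Nat.one_pos⟩ ∧ cdes n σ = k} := by
  have : NeZero n := ⟨hn.ne'⟩
  have rotate_zero (σ : Perm (Fin n)) : (σ * Equiv.addRight i) ⟨0, hn⟩ = σ i := by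
    simp
  refine ⟨Fintype.sum_equiv (Equiv.mulRight (Equiv.addRight i)) _ _ fun σ => ?_,
    fun k => Nat.card_congr (Equiv.subtypeEquiv (Equiv.mulRight (Equiv.addRight i)) fun σ => ?_)⟩
  · simp only [coe_mulRight, rotate_zero, outdeg_tour_dcycle_mul_addRight]
    congr
  · simp only [coe_mulRight, rotate_zero, cdes_mul_addRight]

theorem cycle_rotation_invariance (n : ℕ) (hn : 0 < n) (i : Fin n) (hi : i.val < n - 1) :
    ODPc (Tour n) (DCycle n)
        (fun σ => σ i = ⟨n - 1, Nat.sub_lt hn Nat.one_pos⟩) =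
      ODPc (Tour n) (DCycle n)
        (fun σ => σ ⟨0, hn⟩ = ⟨n - 1, Nat.sub_lt hn Nat.one_pos⟩) ∧
      ∀ k : ℕ,
        Nat.card {σ : Equiv.Perm (Fin n) //
            σ i = ⟨n - 1, Nat.sub_lt hn Nat.one_pos⟩ ∧ cdes n σ = k} =
          Nat.card {σ : Equiv.Perm (Fin n) //
            σ ⟨0, hn⟩ = ⟨n - 1, Nat.sub_lt hn Nat.one_pos⟩ ∧ cdes n σ = k} :=
  cycle_rotation_invariance_general n hn i
end
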